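/- arXiv:2009.10108 — 2 statements merged into one kernel-verified Lean document; each statement's English description precedes it below -/
import Mathlib

section
/- Let V be a real normed vector space and let C, D, G : V → V be continuous linear maps satisfying C∘C = -id, G∘G = id, C∘D = -(D∘C), G∘C = -(C∘G), and G∘D = -(D∘G). For a function f : ℝ → V define L f : ℝ → V by (L f)(κ) = -C(f'(κ)) + κ⁻¹ • (D(f(κ)) + (1/2) • C(f(κ))) + G(f(κ)), where f' denotes the derivative. Then for every f : ℝ → V that is twice differentiable at every point of (0,∞), and for every κ > 0, one has κ² • (L(L f))(κ) = -κ² • f''(κ) + κ • f'(κ) + (D∘D + C∘D)(f(κ)) - (3/4) • f(κ) + κ² • f(κ). -/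
/-!
Write `L f κ = Σ κ (f κ) (f' κ)` with the pointwise symbol
`Σ κ a b = -C b + κ⁻¹ • (D a + ½ • C a) + G a`. Differentiating in `κ` gives
`(L f)' κ = Σ κ (f' κ) (f'' κ) - κ⁻² • (D + ½ C) (f κ)`, the last term coming from the
`κ⁻¹` coefficient. Hence `κ² • L (L f) κ` is an explicit expression in `f κ`, `f' κ`, `f'' κ`,
and it collapses to the stated one using `C² = -1`, `G² = 1` and the anticommutation relations:
all terms mixing `G` with `C` or `D` cancel in pairs.
-/

namespace ConeOperator

variable {V : Type*} [NormedAddCommGroup V] [NormedSpace ℝ V] (C D G : V →L[ℝ] V)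

noncomputable def symbol (κ : ℝ) (a b : V) : V :=
  -C b + κ⁻¹ • (D a + (1/2 : ℝ) • C a) + G a

theorem hasDerivAt_symbol_comp {f g : ℝ → V} {a' b' : V} {κ : ℝ} (hκ : κ ≠ 0)
    (hf : HasDerivAt f a' κ) (hg : HasDerivAt g b' κ) :
    HasDerivAt (fun t => symbol C D G t (f t) (g t))
      (symbol C D G κ a' b' - (κ ^ 2)⁻¹ • (D (f κ) + (1/2 : ℝ) • C (f κ))) κ := by
  have hDhalfC : HasDerivAt (fun t => D (f t) + (1/2 : ℝ) • C (f t)) (D a' + (1/2 : ℝ) • C a') κ :=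
    (D.hasFDerivAt.comp_hasDerivAt κ hf).add
      ((C.hasFDerivAt.comp_hasDerivAt κ hf).const_smul _)
  have h : HasDerivAt (fun t => -C (g t) + t⁻¹ • (D (f t) + (1/2 : ℝ) • C (f t)) + G (f t))
      (-C b' + (κ⁻¹ • (D a' + (1/2 : ℝ) • C a') + -(κ ^ 2)⁻¹ • (D (f κ) + (1/2 : ℝ) • C (f κ)))
        + G a') κ :=
    ((C.hasFDerivAt.comp_hasDerivAt κ hg).neg.add ((hasDerivAt_inv hκ).smul hDhalfC)).add
      (G.hasFDerivAt.comp_hasDerivAt κ hf)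
  exact h.congr_deriv (by simp only [symbol, neg_smul]; abel)

theorem sq_smul_symbol_symbol {κ : ℝ} (hκ : κ ≠ 0)
    (hC : C ∘L C = -(ContinuousLinearMap.id ℝ V))
    (hG : G ∘L G = ContinuousLinearMap.id ℝ V)
    (hCD : C ∘L D = -(D ∘L C))
    (hGC : G ∘L C = -(C ∘L G))
    (hGD : G ∘L D = -(D ∘L G)) (a b c : V) :
    κ ^ 2 • symbol C D G κ (symbol C D G κ a b)
        (symbol C D G κ b c - (κ ^ 2)⁻¹ • (D a + (1/2 : ℝ) • C a)) =
      -(κ ^ 2) • c + κ • b + (D (D a) + C (D a)) - (3/4 : ℝ) • a + κ ^ 2 • a := by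
  have hCC (x : V) : C (C x) = -x := by simpa using DFunLike.congr_fun hC x
  have hGG (x : V) : G (G x) = x := by simpa using DFunLike.congr_fun hG x
  have hDC (x : V) : D (C x) = -C (D x) := by
    simpa [neg_eq_iff_eq_neg] using (DFunLike.congr_fun hCD x).symm
  have hGC' (x : V) : G (C x) = -C (G x) := by simpa using DFunLike.congr_fun hGC x
  have hGD' (x : V) : G (D x) = -D (G x) := by simpa using DFunLike.congr_fun hGD x
  simp only [symbol, map_add, map_neg, map_sub, map_smul, hCC, hGG, hDC, hGC', hGD', smul_neg,
    neg_neg, smul_add, smul_sub]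
  match_scalars <;> field_simp <;> ring

end ConeOperator

/-- the square of the model cone operator
`L f (κ) = -C (f' κ) + κ⁻¹ • (D (f κ) + (1/2) • C (f κ)) + G (f κ)`,
where `C∘C = -id`, `G∘G = id`, and `C, D, G` pairwise anticommute as stated,
satisfies `κ² • (L (L f)) κ = -κ² • f'' κ + κ • f' κ + (D∘D + C∘D)(f κ)
- (3/4) • f κ + κ² • f κ` for `f` twice differentiable on `(0,∞)` and `κ > 0`. -/
theorem cone_operator_square {V : Type*} [NormedAddCommGroup V] [NormedSpace ℝ V]
    (C D G : V →L[ℝ] V)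
    (hC : C ∘L C = -(ContinuousLinearMap.id ℝ V))
    (hG : G ∘L G = ContinuousLinearMap.id ℝ V)
    (hCD : C ∘L D = -(D ∘L C))
    (hGC : G ∘L C = -(C ∘L G))
    (hGD : G ∘L D = -(D ∘L G))
    (L : (ℝ → V) → (ℝ → V))
    (hL : ∀ (f : ℝ → V) (κ : ℝ),
      L f κ = -(C (deriv f κ)) + κ⁻¹ • (D (f κ) + (1/2 : ℝ) • C (f κ)) + G (f κ))
    (f : ℝ → V)
    (hf : ∀ κ ∈ Set.Ioi (0 : ℝ),
      DifferentiableAt ℝ f κ ∧ DifferentiableAt ℝ (deriv f) κ)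
    (κ : ℝ) (hκ : 0 < κ) :
    κ ^ 2 • L (L f) κ =
      -(κ ^ 2) • deriv (deriv f) κ + κ • deriv f κ
        + (D (D (f κ)) + C (D (f κ))) - (3/4 : ℝ) • f κ + κ ^ 2 • f κ := by
  have hL_symbol (g : ℝ → V) : L g = fun t => ConeOperator.symbol C D G t (g t) (deriv g t) :=
    funext (hL g)
  have hderiv : deriv (L f) κ = ConeOperator.symbol C D G κ (deriv f κ) (deriv (deriv f) κ)
      - (κ ^ 2)⁻¹ • (D (f κ) + (1/2 : ℝ) • C (f κ)) := by
    rw [hL_symbol f]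
    exact (ConeOperator.hasDerivAt_symbol_comp C D G hκ.ne' (hf κ hκ).1.hasDerivAt
      (hf κ hκ).2.hasDerivAt).deriv
  have hLL : L (L f) κ = ConeOperator.symbol C D G κ (L f κ) (deriv (L f) κ) := hL (L f) κ
  rw [hLL, hderiv, hL f κ]
  exact ConeOperator.sq_smul_symbol_symbol C D G hκ.ne' hC hG hCD hGC hGD _ _ _
end

section
/- Let α be a nonzero real number. Suppose f : ℝ → ℝ is twice differentiable at every point of (0,∞) and satisfies the modified Bessel equation κ² f''(κ) + κ f'(κ) - (α² + κ²) f(κ) = 0 for all κ > 0. If the function κ ↦ f(κ)²/κ is integrable on (0,∞), then f(κ) = 0 for all κ > 0. -/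
/-!
Substituting `κ = exp t` turns the Euler operator `κ ∂_κ` into `∂_t`, the measure `dκ / κ` on
`(0, ∞)` into Lebesgue measure on `ℝ`, and the equation into `g'' = (α² + e^{2t}) g` for
`g = f ∘ exp`. Then `(g²)'' = 2 g'² + 2 (α² + e^{2t}) g² ≥ 0`, so `g²` is a convex integrable
function on `ℝ`; such a function cannot be positive anywhere, since its superlevel set at a
positive value contains a half-line.
-/

open MeasureTheory Set Real

theorem ConvexOn.forall_lt_le_or_forall_gt_le {h : ℝ → ℝ} (hconv : ConvexOn ℝ univ h) (c : ℝ) :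
    (∀ x < c, h c ≤ h x) ∨ (∀ x > c, h c ≤ h x) := by
  by_contra! hlt
  obtain ⟨⟨a, hac, ha⟩, ⟨b, hcb, hb⟩⟩ := hlt
  have hseg : c ∈ segment ℝ a b := Icc_subset_segment ⟨hac.le, hcb.le⟩
  exact (hconv.le_on_segment (mem_univ a) (mem_univ b) hseg).not_gt (max_lt ha hb)

theorem ConvexOn.nonpos_of_integrable {h : ℝ → ℝ} (hconv : ConvexOn ℝ univ h)
    (hint : Integrable h) (c : ℝ) : h c ≤ 0 := by
  by_contra! hpos
  have hfin : volume {x | h c ≤ ‖h x‖} < ⊤ := hint.measure_norm_ge_lt_top hpos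
  have hnorm : ∀ x, h c ≤ h x → h c ≤ ‖h x‖ := fun x hx ↦ hx.trans (le_abs_self _)
  rcases hconv.forall_lt_le_or_forall_gt_le c with hle | hle
  · exact hfin.ne (measure_mono_top (s₁ := Iio c) (fun x hx ↦ hnorm x (hle x hx)) volume_Iio)
  · exact hfin.ne (measure_mono_top (s₁ := Ioi c) (fun x hx ↦ hnorm x (hle x hx)) volume_Ioi)

theorem integrable_exp_smul_comp_exp_iff {E : Type*} [NormedAddCommGroup E] [NormedSpace ℝ E]
    (g : ℝ → E) : Integrable (fun t ↦ exp t • g (exp t)) ↔ IntegrableOn g (Ioi 0) := by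
  rw [← integrableOn_univ, ← range_exp, ← image_univ]
  simpa [abs_of_pos (exp_pos _)] using (integrableOn_image_iff_integrableOn_abs_deriv_smul
    MeasurableSet.univ (fun x _ ↦ (hasDerivAt_exp x).hasDerivWithinAt) exp_injective.injOn g).symm

theorem integrableOn_Ioi_div_iff_integrable_comp_exp (F : ℝ → ℝ) :
    IntegrableOn (fun κ ↦ F κ / κ) (Ioi 0) ↔ Integrable (fun t ↦ F (exp t)) := by
  rw [← integrable_exp_smul_comp_exp_iff]
  refine integrable_congr (ae_of_all _ fun t ↦ ?_)
  simp [mul_div_cancel₀ _ (exp_pos t).ne']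

theorem convexOn_sq_of_hasDerivAt {g g' q : ℝ → ℝ} (hg : ∀ t, HasDerivAt g (g' t) t)
    (hg' : ∀ t, HasDerivAt g' (q t * g t) t) (hq : ∀ t, 0 ≤ q t) :
    ConvexOn ℝ univ (fun t ↦ g t ^ 2) := by
  refine convexOn_of_hasDerivWithinAt2_nonneg (f' := fun t ↦ 2 * g t * g' t)
    (f'' := fun t ↦ 2 * g' t * g' t + 2 * g t * (q t * g t)) convex_univ
    (fun t _ ↦ (hg t).continuousAt.pow 2 |>.continuousWithinAt) (fun t _ ↦ ?_) (fun t _ ↦ ?_)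
    (fun t _ ↦ ?_)
  · exact ((hg t).fun_pow 2).hasDerivWithinAt.congr_deriv (by ring)
  · exact (((hg t).const_mul 2).mul (hg' t)).hasDerivWithinAt
  · nlinarith [sq_nonneg (g' t), mul_nonneg (hq t) (sq_nonneg (g t))]

section BesselEquation

variable {α t : ℝ} {f : ℝ → ℝ}

theorem hasDerivAt_comp_exp (hf : DifferentiableAt ℝ f (exp t)) :
    HasDerivAt (fun s ↦ f (exp s)) (deriv f (exp t) * exp t) t :=
  hf.hasDerivAt.comp t (hasDerivAt_exp t)

theorem hasDerivAt_euler_deriv_comp_exp_of_bessel (hf' : DifferentiableAt ℝ (deriv f) (exp t))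
    (hode : exp t ^ 2 * deriv (deriv f) (exp t) + exp t * deriv f (exp t)
      - (α ^ 2 + exp t ^ 2) * f (exp t) = 0) :
    HasDerivAt (fun s ↦ deriv f (exp s) * exp s) ((α ^ 2 + exp t ^ 2) * f (exp t)) t :=
  ((hasDerivAt_comp_exp hf').mul (hasDerivAt_exp t)).congr_deriv (by linear_combination hode)

end BesselEquation

theorem modified_bessel_no_L2_solution_general (α : ℝ) (f : ℝ → ℝ)
    (hf : ∀ κ ∈ Set.Ioi (0 : ℝ),
      DifferentiableAt ℝ f κ ∧ DifferentiableAt ℝ (deriv f) κ)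
    (hode : ∀ κ ∈ Set.Ioi (0 : ℝ),
      κ ^ 2 * deriv (deriv f) κ + κ * deriv f κ - (α ^ 2 + κ ^ 2) * f κ = 0)
    (hint : IntegrableOn (fun κ => (f κ) ^ 2 / κ) (Set.Ioi 0)) :
    ∀ κ ∈ Set.Ioi (0 : ℝ), f κ = 0 := by
  have hexp : ∀ t, exp t ∈ Ioi 0 := exp_pos
  have hconv : ConvexOn ℝ univ (fun t ↦ f (exp t) ^ 2) :=
    convexOn_sq_of_hasDerivAt (fun t ↦ hasDerivAt_comp_exp (hf _ (hexp t)).1)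
      (fun t ↦ hasDerivAt_euler_deriv_comp_exp_of_bessel (hf _ (hexp t)).2 (hode _ (hexp t)))
      (fun t ↦ by positivity)
  have hint_exp := (integrableOn_Ioi_div_iff_integrable_comp_exp (fun κ ↦ f κ ^ 2)).1 hint
  intro κ hκ
  have hle := hconv.nonpos_of_integrable hint_exp (log κ)
  rw [exp_log hκ] at hle
  exact pow_eq_zero_iff two_ne_zero |>.1 (le_antisymm hle (sq_nonneg _))

/-- a solution of the modified Bessel equation
`κ² f'' + κ f' - (α² + κ²) f = 0` on `(0,∞)` with `α ≠ 0` such that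
`κ ↦ f(κ)²/κ` is integrable on `(0,∞)` vanishes identically on `(0,∞)`. -/
theorem modified_bessel_no_L2_solution (α : ℝ) (hα : α ≠ 0) (f : ℝ → ℝ)
    (hf : ∀ κ ∈ Set.Ioi (0 : ℝ),
      DifferentiableAt ℝ f κ ∧ DifferentiableAt ℝ (deriv f) κ)
    (hode : ∀ κ ∈ Set.Ioi (0 : ℝ),
      κ ^ 2 * deriv (deriv f) κ + κ * deriv f κ - (α ^ 2 + κ ^ 2) * f κ = 0)
    (hint : IntegrableOn (fun κ => (f κ) ^ 2 / κ) (Set.Ioi 0)) :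
    ∀ κ ∈ Set.Ioi (0 : ℝ), f κ = 0 :=
  modified_bessel_no_L2_solution_general α f hf hode hint
end
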